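/- arXiv:2602.07638 — 2 statements merged into one kernel-verified Lean document; each statement's English description precedes it below -/
import Mathlib

section
/- For every integer n ≥ 3, the sum over 1 ≤ i < j ≤ n-1 of (cos(2πi/n) - cos(2πj/n))² equals n(n-3)/2. -/
/-!
The pairwise energy of any finite family equals `N * Σ x_k ^ 2 - (Σ x_k) ^ 2`. For the points
`x_k = cos (2πk/n)`, `k = 1, …, n-1`, both moments follow from the vanishing of
`Σ_{k<n} cos (2πmk/n)` for `n ∤ m` (the real part of a geometric sum of `n`-th roots of unity):
the `k = 0` term being `1` gives `Σ x_k = -1`, and `cos² θ = (1 + cos 2θ)/2` gives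
`Σ x_k ^ 2 = (n - 2)/2`. Hence the energy is `(n - 1)(n - 2)/2 - 1 = n(n - 3)/2`.
-/

open Real Finset

theorem Finset.sum_sum_filter_lt_sub_sq {ι R : Type*} [LinearOrder ι] [CommRing R]
    (s : Finset ι) (x : ι → R) :
    ∑ i ∈ s, ∑ j ∈ s with i < j, (x i - x j) ^ 2 =
      #s * ∑ i ∈ s, x i ^ 2 - (∑ i ∈ s, x i) ^ 2 := by
  induction s using Finset.induction_on_max with
  | empty => simp
  | insert a s hlt ih =>
    have ha : a ∉ s := fun h => lt_irrefl a (hlt a h)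
    have hfilter_top : {j ∈ insert a s | a < j} = ∅ :=
      filter_eq_empty_iff.mpr fun j hj => not_lt.mpr <| by
        rcases mem_insert.mp hj with rfl | hj
        exacts [le_rfl, (hlt j hj).le]
    have hfilter : ∀ i ∈ s, {j ∈ insert a s | i < j} = insert a {j ∈ s | i < j} :=
      fun i hi => by rw [filter_insert, if_pos (hlt i hi)]
    rw [sum_insert ha, hfilter_top, sum_empty, zero_add, sum_congr rfl fun i hi => by
      rw [hfilter i hi, sum_insert (by simp [ha])], sum_add_distrib, ih, card_insert_of_notMem ha,
      sum_insert ha, sum_insert ha]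
    have hcross : ∑ i ∈ s, (x i - x a) ^ 2 =
        ∑ i ∈ s, x i ^ 2 - 2 * x a * ∑ i ∈ s, x i + #s * x a ^ 2 := by
      simp only [sub_sq, sum_add_distrib, sum_sub_distrib, sum_const, nsmul_eq_mul, ← sum_mul,
        ← mul_sum]
      ring
    rw [hcross]
    push_cast
    ring

theorem sum_range_cos_two_pi_mul_div {n m : ℕ} (hnm : ¬ n ∣ m) :
    ∑ k ∈ range n, cos (2 * π * m * k / n) = 0 := by
  rcases eq_or_ne n 0 with rfl | hn
  · simp
  set ζ := Complex.exp (2 * π * Complex.I / n)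
  have hζ : IsPrimitiveRoot ζ n := Complex.isPrimitiveRoot_exp n hn
  have hcos : ∀ k : ℕ, cos (2 * π * m * k / n) = ((ζ ^ m) ^ k).re := fun k => by
    rw [← pow_mul, ← Complex.exp_nat_mul, ← Complex.exp_ofReal_mul_I_re]
    congr 2
    push_cast
    ring
  have hζm : ζ ^ m ≠ 1 := fun h => hnm ((hζ.pow_eq_one_iff_dvd m).mp h)
  have hζmn : (ζ ^ m) ^ n = 1 := by rw [← pow_mul, mul_comm, pow_mul, hζ.pow_eq_one, one_pow]
  simp_rw [hcos, ← Complex.re_sum, geom_sum_eq hζm, hζmn, sub_self, zero_div, Complex.zero_re]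

theorem sum_Ico_one_cos_two_pi_mul_div {n m : ℕ} (hn : 0 < n) (hnm : ¬ n ∣ m) :
    ∑ k ∈ Ico 1 n, cos (2 * π * m * k / n) = -1 := by
  have h := sum_range_cos_two_pi_mul_div hnm
  rw [range_eq_Ico, sum_eq_sum_Ico_succ_bot hn] at h
  simp only [CharP.cast_eq_zero, mul_zero, zero_div, cos_zero] at h
  linarith

theorem quadratic_energy_at_cosine_points (n : ℕ) (hn : 3 ≤ n) :
    ∑ i ∈ Finset.Ico 1 n, ∑ j ∈ Finset.Ico (i + 1) n,
      (Real.cos (2 * π * i / n) - Real.cos (2 * π * j / n)) ^ 2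
    = n * (n - 3) / 2 := by
  have hcard : (#(Ico 1 n) : ℝ) = n - 1 := by
    rw [Nat.card_Ico, Nat.cast_sub (by omega), Nat.cast_one]
  have hsum : ∑ k ∈ Ico 1 n, cos (2 * π * k / n) = -1 := by
    simpa using sum_Ico_one_cos_two_pi_mul_div (m := 1) (by omega)
      (Nat.not_dvd_of_pos_of_lt one_pos (by omega))
  have hsum_double : ∑ k ∈ Ico 1 n, cos (2 * (2 * π * k / n)) = -1 := by
    rw [← sum_Ico_one_cos_two_pi_mul_div (n := n) (m := 2) (by omega)
      (Nat.not_dvd_of_pos_of_lt two_pos (by omega))]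
    refine sum_congr rfl fun k _ => congrArg cos ?_
    push_cast
    ring
  have hsum_sq : ∑ k ∈ Ico 1 n, cos (2 * π * k / n) ^ 2 = (n - 2) / 2 := by
    simp only [cos_sq, sum_add_distrib, sum_const, nsmul_eq_mul, ← sum_div, hcard, hsum_double]
    ring
  calc _ = ∑ i ∈ Ico 1 n, ∑ j ∈ Ico 1 n with i < j,
        (cos (2 * π * i / n) - cos (2 * π * j / n)) ^ 2 :=
        sum_congr rfl fun i _ => by
          congr 1
          ext j
          simp only [mem_Ico, mem_filter]
          omega
    _ = _ := sum_sum_filter_lt_sub_sq _ _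
    _ = _ := by rw [hcard, hsum, hsum_sq]; ring
end

section
/- For every integer n ≥ 8, the complete symmetric sum Σ over 1 ≤ i₁ ≤ i₂ ≤ ... ≤ i₆ ≤ n-1 of Π_{ν=1}^{6} cos(2πi_ν/n) equals n(n+4)(n+5)/384. -/
/-!
Newton's identity `r hᵣ = ∑_{j=1}^r pⱼ h_{r-j}` expresses `h₆` through the power sums
`p₁, …, p₆` of the points. Writing `2 cos (2πk/n) = ζᵏ + ζ⁻ᵏ` with `ζ` a primitive `n`-th root
of unity and expanding binomially, the orthogonality of the characters `k ↦ ζ^{(2i-j)k}` shows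
that for `j < n` the full sum `∑_{k=0}^{n-1} (2 cos (2πk/n))ʲ` is `n·C(j, j/2)` for even `j` and
`0` for odd `j`; removing the term `k = 0` gives the power sums of the punctured points.
-/

open Real Finset

/-- The complete homogeneous symmetric sum of degree `r` in the variables
`f k`, `k ∈ s`: the sum over all multisets of size `r` from `s` of the product
of the corresponding values (i.e. over `1 ≤ i₁ ≤ ⋯ ≤ i_r`, all in `s`). -/
noncomputable def completeSym (s : Finset ℕ) (r : ℕ) (f : ℕ → ℝ) : ℝ :=
  ∑ m ∈ s.sym r, (Multiset.map f (Sym.toMultiset m)).prod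

section Newton

variable {ι R : Type*} [DecidableEq ι] [CommSemiring R]

def Finset.symMultisets (s : Finset ι) (r : ℕ) : Finset (Multiset ι) :=
  (s.sym r).map ⟨Sym.toMultiset, Sym.coe_injective⟩

lemma Finset.mem_symMultisets {s : Finset ι} {r : ℕ} {m : Multiset ι} :
    m ∈ s.symMultisets r ↔ Multiset.card m = r ∧ ∀ a ∈ m, a ∈ s := by
  simp only [symMultisets, mem_map, Function.Embedding.coeFn_mk]
  constructor
  · rintro ⟨x, hx, rfl⟩
    exact ⟨x.2, mem_sym_iff.1 hx⟩
  · rintro ⟨hc, hs⟩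
    exact ⟨⟨m, hc⟩, mem_sym_iff.2 hs, rfl⟩

lemma Finset.sum_symMultisets_filter_le_count {s : Finset ι} {r j : ℕ} {k : ι} (hk : k ∈ s)
    (hj : j ≤ r) (g : Multiset ι → R) :
    ∑ m ∈ (s.symMultisets r).filter (j ≤ ·.count k), g (m - .replicate j k)
      = ∑ m ∈ s.symMultisets (r - j), g m := by
  have hle {m : Multiset ι} (h : j ≤ m.count k) : .replicate j k ≤ m :=
    Multiset.le_count_iff_replicate_le.1 h
  refine sum_nbij' (· - .replicate j k) (· + .replicate j k) ?_ ?_ ?_ ?_ (fun _ _ => rfl)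
  · intro m hm
    simp only [mem_filter, mem_symMultisets] at hm ⊢
    obtain ⟨⟨hc, hs⟩, hcount⟩ := hm
    exact ⟨by rw [Multiset.card_sub (hle hcount), hc, Multiset.card_replicate],
      fun a ha => hs a (Multiset.mem_of_le (Multiset.sub_le_self _ _) ha)⟩
  · intro m hm
    simp only [mem_filter, mem_symMultisets] at hm ⊢
    obtain ⟨hc, hs⟩ := hm
    refine ⟨⟨by simp [hc, hj], fun a ha => ?_⟩, by simp⟩
    rcases Multiset.mem_add.1 ha with h | h
    · exact hs a h
    · rwa [Multiset.eq_of_mem_replicate h]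
  · intro m hm
    simp only [mem_filter] at hm
    exact tsub_add_cancel_of_le (hle hm.2)
  · intro m _
    exact add_tsub_cancel_right _ _

variable (f : ι → R)

/-- Each `k` is counted once for every `j ≤ count k m`; splitting off `replicate j k` factors
the product as `f k ^ j` times the rest. -/
lemma Multiset.natCast_card_mul_prod_map {s : Finset ι} {m : Multiset ι} (hs : ∀ a ∈ m, a ∈ s) :
    (card m : R) * (m.map f).prod = ∑ k ∈ s, ∑ j ∈ Finset.Icc 1 (card m),
      if j ≤ m.count k then f k ^ j * ((m - replicate j k).map f).prod else 0 := by
  have hfilter (k : ι) :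
      (Finset.Icc 1 (card m)).filter (· ≤ m.count k) = Finset.Icc 1 (m.count k) := by
    have := m.count_le_card k
    ext j
    simp only [Finset.mem_filter, Finset.mem_Icc]
    omega
  calc (card m : R) * (m.map f).prod = ∑ k ∈ s, (m.count k : R) * (m.map f).prod := by
        rw [← sum_mul, ← Nat.cast_sum, sum_count_eq_card hs]
    _ = ∑ k ∈ s, ∑ j ∈ Finset.Icc 1 (card m), if j ≤ m.count k then (m.map f).prod else 0 := by
        refine sum_congr rfl fun k _ => ?_
        rw [← sum_filter, sum_const, hfilter, Nat.card_Icc, nsmul_eq_mul, Nat.add_sub_cancel]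
    _ = _ := by
        refine sum_congr rfl fun k _ => sum_congr rfl fun j _ => ?_
        split_ifs with h
        · conv_lhs => rw [← tsub_add_cancel_of_le (le_count_iff_replicate_le.1 h)]
          simp [prod_replicate, mul_comm]
        · rfl

variable (s : Finset ι)

/-- Newton's identity for complete homogeneous symmetric sums. -/
theorem Finset.natCast_mul_sum_symMultisets (r : ℕ) :
    (r : R) * ∑ m ∈ s.symMultisets r, (m.map f).prod
      = ∑ j ∈ Icc 1 r, (∑ k ∈ s, f k ^ j) * ∑ m ∈ s.symMultisets (r - j), (m.map f).prod := by
  calc _ = ∑ m ∈ s.symMultisets r, ∑ k ∈ s, ∑ j ∈ Icc 1 r,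
        if j ≤ m.count k then f k ^ j * ((m - .replicate j k).map f).prod else 0 := by
        rw [mul_sum]
        refine sum_congr rfl fun m hm => ?_
        obtain ⟨rfl, hs⟩ := mem_symMultisets.1 hm
        exact Multiset.natCast_card_mul_prod_map f hs
    _ = ∑ k ∈ s, ∑ j ∈ Icc 1 r, ∑ m ∈ s.symMultisets r,
        if j ≤ m.count k then f k ^ j * ((m - .replicate j k).map f).prod else 0 := by
        rw [sum_comm]
        exact sum_congr rfl fun k _ => sum_comm
    _ = ∑ k ∈ s, ∑ j ∈ Icc 1 r, f k ^ j * ∑ m ∈ s.symMultisets (r - j), (m.map f).prod := by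
        refine sum_congr rfl fun k hk => sum_congr rfl fun j hj => ?_
        rw [← sum_filter, ← mul_sum,
          sum_symMultisets_filter_le_count hk (mem_Icc.1 hj).2 fun m => (m.map f).prod]
    _ = _ := by
        rw [sum_comm]
        simp_rw [sum_mul]

end Newton

lemma completeSym_eq_sum_symMultisets (s : Finset ℕ) (r : ℕ) (f : ℕ → ℝ) :
    completeSym s r f = ∑ m ∈ s.symMultisets r, (m.map f).prod := by
  rw [symMultisets, sum_map]
  rfl

lemma sum_range_two_mul_cos_pow {n j : ℕ} (hj : j < n) :
    ∑ k ∈ range n, (2 * cos (2 * π * k / n)) ^ j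
      = if Even j then (n * j.choose (j / 2) : ℝ) else 0 := by
  set ζ : ℂ := Complex.exp (2 * π * Complex.I / n)
  have hζ : IsPrimitiveRoot ζ n := Complex.isPrimitiveRoot_exp n (by omega)
  have hζ0 : ζ ≠ 0 := Complex.exp_ne_zero _
  have hcos (k : ℕ) : ((2 * cos (2 * π * k / n) : ℝ) : ℂ) = ζ ^ k + (ζ ^ k)⁻¹ := by
    rw [← Complex.exp_nat_mul, ← Complex.exp_neg]
    push_cast
    rw [Complex.two_cos]
    ring_nf
  have hgeom {i : ℕ} (hi : i ≤ j) :
      ∑ k ∈ range n, (ζ ^ i * (ζ ^ (j - i))⁻¹) ^ k = if 2 * i = j then (n : ℂ) else 0 := by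
    split_ifs with h
    · rw [show j - i = i by omega]
      simp [hζ0]
    · have hu : ζ ^ i * (ζ ^ (j - i))⁻¹ ≠ 1 := by
        rw [Ne, mul_inv_eq_one₀ (pow_ne_zero _ hζ0)]
        exact fun h' => h (by have := hζ.pow_inj (by omega) (by omega) h'; omega)
      rw [geom_sum_eq hu, mul_pow, inv_pow, ← pow_mul, ← pow_mul, pow_mul', pow_mul' ζ,
        hζ.pow_eq_one]
      simp
  apply Complex.ofReal_injective
  push_cast [hcos]
  simp_rw [add_pow, sum_comm (s := range n)]
  calc _ = ∑ i ∈ range (j + 1), (j.choose i : ℂ) * if 2 * i = j then (n : ℂ) else 0 := by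
        refine sum_congr rfl fun i hi => ?_
        rw [← hgeom (by simpa [Nat.lt_succ_iff] using hi), mul_sum]
        refine sum_congr rfl fun k _ => ?_
        ring
    _ = _ := by
        split_ifs with hev
        · obtain ⟨m, rfl⟩ := hev
          simp_rw [show ∀ i, 2 * i = m + m ↔ i = m by omega]
          simp [mul_comm, ← two_mul]
          omega
        · simp_rw [show ∀ i, ¬ 2 * i = j from fun i h => hev ⟨i, by omega⟩]
          simp

lemma sum_Icc_cos_pow {n j : ℕ} (hj : j < n) :
    ∑ k ∈ Icc 1 (n - 1), cos (2 * π * k / n) ^ j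
      = (if Even j then (n * j.choose (j / 2) : ℝ) else 0) / 2 ^ j - 1 := by
  have hIcc : Icc 1 (n - 1) = Ico 1 n := by
    ext k
    simp only [mem_Icc, mem_Ico]
    omega
  rw [← sum_range_two_mul_cos_pow hj, eq_sub_iff_add_eq, hIcc, sum_div,
    sum_range_eq_add_Ico _ (by omega)]
  simp [mul_pow, add_comm]

theorem h6_at_cosine_points (n : ℕ) (hn : 8 ≤ n) :
    completeSym (Finset.Icc 1 (n - 1)) 6 (fun k => Real.cos (2 * π * k / n))
    = n * (n + 4) * (n + 5) / 384 := by
  let P (j : ℕ) : ℝ := (if Even j then (n * j.choose (j / 2) : ℝ) else 0) / 2 ^ j - 1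
  let H (r : ℕ) : ℝ := completeSym (Icc 1 (n - 1)) r fun k => cos (2 * π * k / n)
  have newton {r : ℕ} (hr : 1 ≤ r) (hrn : r < n) :
      H r = (∑ j ∈ Icc 1 r, P j * H (r - j)) / r := by
    rw [eq_div_iff (by positivity), mul_comm]
    simp only [H, completeSym_eq_sum_symMultisets, natCast_mul_sum_symMultisets]
    exact sum_congr rfl fun j hj => by rw [sum_Icc_cos_pow (by simp at hj; omega)]
  have h0 : H 0 = 1 := by simp [H, completeSym]; rfl
  have h1 : H 1 = -1 := by
    rw [newton le_rfl (by omega)]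
    norm_num [P, h0]
  have h2 : H 2 = n / 4 := by
    rw [newton (by norm_num) (by omega)]
    norm_num [sum_Icc_succ_top, P, h0, h1]
    ring
  have h3 : H 3 = -n / 4 := by
    rw [newton (by norm_num) (by omega)]
    norm_num [sum_Icc_succ_top, P, h0, h1, h2, Nat.choose]
    ring
  have h4 : H 4 = n * (n + 3) / 32 := by
    rw [newton (by norm_num) (by omega)]
    norm_num [sum_Icc_succ_top, P, h0, h1, h2, h3, Nat.choose]
    ring
  have h5 : H 5 = -n * (n + 3) / 32 := by
    rw [newton (by norm_num) (by omega)]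
    norm_num [sum_Icc_succ_top, P, h0, h1, h2, h3, h4, Nat.choose]
    ring
  change H 6 = _
  rw [newton (by norm_num) (by omega)]
  norm_num [sum_Icc_succ_top, P, h0, h1, h2, h3, h4, h5, Nat.choose]
  ring
end
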